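/- arXiv:1307.3816 — 2 statements merged into one kernel-verified Lean document; each statement's English description precedes it below -/
import Mathlib

section
/- Suppose a and b are Drazin invertible with ab = λba, λ ≠ 0, and let w = a·a^D·(a−b)·b·b^D. Then w·(a−b) = (a−b)·w, a^π·w = w·a^π = 0, and b^π·w = w·b^π = 0, where x^π = 1 − x·x^D. -/
/-- `x` is a Drazin inverse of `a`. -/
def IsDrazinInverse {A : Type*} [Ring A] (a x : A) : Prop :=
  x * a * x = x ∧ a * x = x * a ∧ ∃ k : ℕ, a ^ (k + 1) * x = a ^ k

lemma drazin_comm_aux {F A : Type*} [Field F] [Ring A] [Algebra F A]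
    (a aD b : A) (haD : IsDrazinInverse a aD) (l : F) (hl : l ≠ 0)
    (h : a * b = l • (b * a)) : (a * aD) * b = b * (a * aD) := by
  obtain ⟨h1, h2, k, hk⟩ := haD
  have hc : Commute a aD := h2
  have hpow : ∀ n : ℕ, a ^ n * b = (l ^ n) • (b * a ^ n) := by
    intro n
    induction n with
    | zero => simp
    | succ n ih =>
      rw [pow_succ' a, mul_assoc, ih, mul_smul_comm, ← mul_assoc, h, smul_mul_assoc,
        smul_smul, mul_assoc, ← pow_succ' a, ← pow_succ]
  have hee : (a * aD) * (a * aD) = a * aD := by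
    rw [mul_assoc a aD (a * aD), ← mul_assoc aD a aD, h1]
  have hstep : ∀ n : ℕ, a ^ (n + 1) * aD ^ (n + 1) = a * aD := by
    intro n
    induction n with
    | zero => simp
    | succ n ih =>
      calc a ^ (n + 1 + 1) * aD ^ (n + 1 + 1)
          = a * (a ^ (n + 1) * aD ^ (n + 1)) * aD := by
            rw [pow_succ' a, pow_succ aD]; noncomm_ring
        _ = a * (aD * a) * aD := by rw [ih, h2]
        _ = (a * aD) * (a * aD) := by noncomm_ring
        _ = a * aD := hee
  have he_pow : a * aD = a ^ k * aD ^ k := by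
    cases k with
    | zero => simpa using hk
    | succ n => exact (hstep n).symm
  have hka : a ^ k * (a * aD) = a ^ k := by
    rw [← mul_assoc, ← pow_succ, hk]
  have hak : (a * aD) * a ^ k = a ^ k := by
    have hcc : Commute (a ^ k) (a * aD) := ((Commute.refl a).mul_right hc).pow_left k
    rw [← hcc.eq, hka]
  set π : A := 1 - a * aD with hπdef
  have haπ1 : a ^ k * π = 0 := by
    rw [hπdef, mul_sub, mul_one, hka, sub_self]
  have haπ2 : π * a ^ k = 0 := by
    rw [hπdef, sub_mul, one_mul, hak, sub_self]
  have h5 : (a * aD) * b * π = 0 := by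
    calc (a * aD) * b * π
        = aD ^ k * ((a ^ k * b) * π) := by
          rw [he_pow, (hc.pow_pow k k).eq, mul_assoc (aD ^ k), mul_assoc (aD ^ k)]
      _ = aD ^ k * ((l ^ k • (b * a ^ k)) * π) := by rw [hpow]
      _ = l ^ k • (aD ^ k * (b * (a ^ k * π))) := by
          rw [smul_mul_assoc, mul_smul_comm, mul_assoc]
      _ = 0 := by rw [haπ1, mul_zero, mul_zero, smul_zero]
  have h6 : π * b * (a * aD) = 0 := by
    have e1 : π * b * (a * aD) = π * (b * a ^ k) * aD ^ k := by
      rw [he_pow]; noncomm_ring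
    have hz : l ^ k • (π * b * (a * aD)) = 0 := by
      rw [e1, ← smul_mul_assoc, ← mul_smul_comm, ← hpow, ← mul_assoc, haπ2,
        zero_mul, zero_mul]
    exact (smul_eq_zero.mp hz).resolve_left (pow_ne_zero k hl)
  have key : (a * aD) * b - b * (a * aD)
      = (a * aD) * b * π - π * b * (a * aD) := by
    rw [hπdef]; noncomm_ring
  rw [h5, h6, sub_zero] at key
  exact sub_eq_zero.mp key

theorem stmt6 {F A : Type*} [Field F] [Ring A] [Algebra F A]
    (a aD b bD : A) (haD : IsDrazinInverse a aD) (hbD : IsDrazinInverse b bD)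
    (l : F) (hl : l ≠ 0) (h : a * b = l • (b * a)) :
    let w := a * aD * (a - b) * (b * bD)
    w * (a - b) = (a - b) * w ∧
    (1 - a * aD) * w = 0 ∧ w * (1 - a * aD) = 0 ∧
    (1 - b * bD) * w = 0 ∧ w * (1 - b * bD) = 0 := by
  intro w
  have heb : (a * aD) * b = b * (a * aD) := drazin_comm_aux a aD b haD l hl h
  have hba : b * a = l⁻¹ • (a * b) := by rw [h, inv_smul_smul₀ hl]
  have hfa : (b * bD) * a = a * (b * bD) :=
    drazin_comm_aux b bD a hbD l⁻¹ (inv_ne_zero hl) hba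
  have hef : (a * aD) * (b * bD) = (b * bD) * (a * aD) :=
    drazin_comm_aux a aD (b * bD) haD (1 : F) one_ne_zero (by rw [one_smul, hfa])
  have hee : (a * aD) * (a * aD) = a * aD := by
    rw [mul_assoc a aD (a * aD), ← mul_assoc aD a aD, haD.1]
  have hff : (b * bD) * (b * bD) = b * bD := by
    rw [mul_assoc b bD (b * bD), ← mul_assoc bD b bD, hbD.1]
  have hea : (a * aD) * a = a * (a * aD) := by rw [mul_assoc, haD.2.1]
  have hfb : (b * bD) * b = b * (b * bD) := by rw [mul_assoc, hbD.2.1]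
  have hed : (a * aD) * (a - b) = (a - b) * (a * aD) := by
    rw [mul_sub, sub_mul, hea, heb]
  have hfd : (b * bD) * (a - b) = (a - b) * (b * bD) := by
    rw [mul_sub, sub_mul, hfa, hfb]
  have hw : w = (a - b) * ((a * aD) * (b * bD)) := by
    show a * aD * (a - b) * (b * bD) = _
    rw [hed, mul_assoc]
  have hefd : ((a * aD) * (b * bD)) * (a - b) = (a - b) * ((a * aD) * (b * bD)) := by
    rw [mul_assoc, hfd, ← mul_assoc, hed, mul_assoc]
  refine ⟨?_, ?_, ?_, ?_, ?_⟩
  · rw [hw, mul_assoc, hefd, ← mul_assoc]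
  · show (1 - a * aD) * (a * aD * (a - b) * (b * bD)) = 0
    calc (1 - a * aD) * (a * aD * (a - b) * (b * bD))
        = ((1 - a * aD) * (a * aD)) * ((a - b) * (b * bD)) := by noncomm_ring
      _ = 0 := by rw [sub_mul, one_mul, hee, sub_self, zero_mul]
  · show a * aD * (a - b) * (b * bD) * (1 - a * aD) = 0
    have hfe' : (b * bD) * (1 - a * aD) = (1 - a * aD) * (b * bD) := by
      rw [mul_sub, sub_mul, mul_one, one_mul, hef]
    have heπ : (a * aD) * (1 - a * aD) = 0 := by
      rw [mul_sub, mul_one, hee, sub_self]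
    calc a * aD * (a - b) * (b * bD) * (1 - a * aD)
        = (a * aD * (a - b)) * ((b * bD) * (1 - a * aD)) := by noncomm_ring
      _ = ((a - b) * (a * aD)) * ((1 - a * aD) * (b * bD)) := by rw [hed, hfe']
      _ = (a - b) * (((a * aD) * (1 - a * aD)) * (b * bD)) := by noncomm_ring
      _ = 0 := by rw [heπ, zero_mul, mul_zero]
  · show (1 - b * bD) * (a * aD * (a - b) * (b * bD)) = 0
    have hπfe : (1 - b * bD) * (a * aD) = (a * aD) * (1 - b * bD) := by
      rw [mul_sub, sub_mul, mul_one, one_mul, hef]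
    have hπfd : (1 - b * bD) * (a - b) = (a - b) * (1 - b * bD) := by
      rw [sub_mul, one_mul, hfd, mul_sub, mul_one]
    have hπf : (1 - b * bD) * (b * bD) = 0 := by
      rw [sub_mul, one_mul, hff, sub_self]
    calc (1 - b * bD) * (a * aD * (a - b) * (b * bD))
        = ((1 - b * bD) * (a * aD)) * ((a - b) * (b * bD)) := by noncomm_ring
      _ = ((a * aD) * (1 - b * bD)) * ((a - b) * (b * bD)) := by rw [hπfe]
      _ = (a * aD) * (((1 - b * bD) * (a - b)) * (b * bD)) := by noncomm_ring
      _ = (a * aD) * (((a - b) * (1 - b * bD)) * (b * bD)) := by rw [hπfd]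
      _ = (a * aD) * ((a - b) * ((1 - b * bD) * (b * bD))) := by noncomm_ring
      _ = 0 := by rw [hπf, mul_zero, mul_zero]
  · show a * aD * (a - b) * (b * bD) * (1 - b * bD) = 0
    have hfπ : (b * bD) * (1 - b * bD) = 0 := by
      rw [mul_sub, mul_one, hff, sub_self]
    calc a * aD * (a - b) * (b * bD) * (1 - b * bD)
        = (a * aD * (a - b)) * ((b * bD) * (1 - b * bD)) := by noncomm_ring
      _ = 0 := by rw [hfπ, mul_zero]
end

section
/- Suppose a and b are Drazin invertible with ab = λba, λ ≠ 0. Then the element b·b^π·a^π − a·a^π·b^π is nilpotent, where x^π = 1 − x·x^D. -/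
section SkewCommute

variable {R A : Type*} [CommRing R] [Ring A] [Algebra R A]

theorem pow_mul_eq_smul_mul_pow {a x : A} {μ : R} (h : a * x = μ • (x * a)) (n : ℕ) :
    a ^ n * x = μ ^ n • (x * a ^ n) := by
  induction n with
  | zero => simp
  | succ n ih =>
    rw [pow_succ, mul_assoc, h, mul_smul_comm, ← mul_assoc, ih, smul_mul_assoc, smul_smul,
      pow_succ, mul_comm (μ ^ n), mul_assoc]

theorem sub_pow_mem_span_pow_mul_pow {u v : A} {μ : R} (h : v * u = μ • (u * v)) (n : ℕ) :
    (u - v) ^ n ∈ Submodule.span R {x | ∃ i j, i + j = n ∧ u ^ i * v ^ j = x} := by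
  induction n with
  | zero => exact Submodule.subset_span ⟨0, 0, rfl, by simp⟩
  | succ n ih =>
    rw [pow_succ]
    refine Submodule.span_induction (p := fun y _ => y * (u - v) ∈ Submodule.span R _)
      ?_ (by simp) (fun y z _ _ hy hz => by rw [add_mul]; exact add_mem hy hz)
      (fun c y _ hy => by rw [smul_mul_assoc]; exact Submodule.smul_mem _ c hy) ih
    rintro _ ⟨i, j, rfl, rfl⟩
    have hstep :
        u ^ i * v ^ j * (u - v) = μ ^ j • (u ^ (i + 1) * v ^ j) - u ^ i * v ^ (j + 1) := by
      rw [mul_sub, mul_assoc, pow_mul_eq_smul_mul_pow h, mul_smul_comm, ← mul_assoc, ← pow_succ,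
        mul_assoc, ← pow_succ]
    rw [hstep]
    exact sub_mem (Submodule.smul_mem _ _ (Submodule.subset_span ⟨i + 1, j, by omega, rfl⟩))
      (Submodule.subset_span ⟨i, j + 1, by omega, rfl⟩)

theorem isNilpotent_sub_of_mul_eq_smul_mul {u v : A} {μ : R} (h : v * u = μ • (u * v))
    (hu : IsNilpotent u) (hv : IsNilpotent v) : IsNilpotent (u - v) := by
  obtain ⟨m, hm⟩ := hu
  obtain ⟨n, hn⟩ := hv
  refine ⟨m + n, (Submodule.mem_bot R).mp ?_⟩
  refine Submodule.span_le.mpr ?_ (sub_pow_mem_span_pow_mul_pow h (m + n))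
  rintro _ ⟨i, j, hij, rfl⟩
  rcases le_or_gt m i with hmi | hmi
  · simp [pow_eq_zero_of_le hmi hm]
  · simp [pow_eq_zero_of_le (by omega : n ≤ j) hn]

theorem mul_mul_mul_eq_smul_of_commute {a b p q : A} {μ : R} (h : a * b = μ • (b * a))
    (hbp : Commute b p) (haq : Commute a q) (hpq : Commute p q) :
    a * p * (b * q) = μ • (b * q * (a * p)) :=
  calc a * p * (b * q) = a * b * (p * q) := by
        rw [mul_assoc, ← mul_assoc p, ← hbp.eq, mul_assoc, ← mul_assoc]
    _ = μ • (b * a * (q * p)) := by rw [h, smul_mul_assoc, hpq.eq]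
    _ = μ • (b * q * (a * p)) := by
        rw [mul_assoc, ← mul_assoc a, haq.eq, mul_assoc, ← mul_assoc]

end SkewCommute

namespace IsDrazinInverse

variable {A : Type*} [Ring A] {a x : A}

theorem commute (hD : IsDrazinInverse a x) : Commute a x := hD.2.1

theorem isIdempotentElem_mul (hD : IsDrazinInverse a x) : IsIdempotentElem (a * x) := by
  rw [IsIdempotentElem, mul_assoc, ← mul_assoc x, hD.1]

theorem commute_one_sub (hD : IsDrazinInverse a x) : Commute a (1 - a * x) :=
  (Commute.one_right a).sub_right ((Commute.refl a).mul_right hD.commute)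

theorem exists_pow_mul_eq (hD : IsDrazinInverse a x) :
    ∃ n, a ^ n * (1 - a * x) = 0 ∧ a ^ n * x ^ n = a * x := by
  obtain ⟨k, hk⟩ := hD.2.2
  refine ⟨k + 1, ?_, ?_⟩
  · rw [mul_sub, mul_one, hD.commute.eq, ← mul_assoc, hk, ← pow_succ, sub_self]
  · rw [← hD.commute.mul_pow, hD.isIdempotentElem_mul.pow_succ_eq]

theorem isNilpotent_mul_one_sub (hD : IsDrazinInverse a x) : IsNilpotent (a * (1 - a * x)) := by
  obtain ⟨n, hn, -⟩ := hD.exists_pow_mul_eq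
  refine ⟨n + 1, ?_⟩
  rw [hD.commute_one_sub.mul_pow, hD.isIdempotentElem_mul.one_sub.pow_succ_eq, pow_succ',
    mul_assoc, hn, mul_zero]

theorem commute_mul_of_mul_eq_smul {F : Type*} [Field F] [Algebra F A] {b : A} {μ : F}
    (hD : IsDrazinInverse a x) (hμ : μ ≠ 0) (h : a * b = μ • (b * a)) :
    Commute b (a * x) := by
  obtain ⟨n, hn, he⟩ := hD.exists_pow_mul_eq
  have hn' : (1 - a * x) * a ^ n = 0 := by rw [← (hD.commute_one_sub.pow_left n).eq, hn]
  have hpow : a ^ n * b = μ ^ n • (b * a ^ n) := pow_mul_eq_smul_mul_pow h n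
  have hpow' : b * a ^ n = (μ ^ n)⁻¹ • (a ^ n * b) := by
    rw [hpow, inv_smul_smul₀ (pow_ne_zero n hμ)]
  have hleft : (1 - a * x) * b * (a * x) = 0 := by
    nth_rw 2 [← he]
    rw [← mul_assoc, mul_assoc _ b, hpow', mul_smul_comm, smul_mul_assoc, ← mul_assoc, hn',
      zero_mul, zero_mul, smul_zero]
  have hright : a * x * b * (1 - a * x) = 0 := by
    nth_rw 1 [← he]
    rw [(hD.commute.pow_pow n n).eq, mul_assoc _ (a ^ n), hpow, mul_smul_comm, smul_mul_assoc,
      mul_assoc, mul_assoc, hn, mul_zero, mul_zero, smul_zero]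
  calc b * (a * x)
      = b * (a * x) - ((1 - a * x) * b * (a * x) - a * x * b * (1 - a * x)) := by
        rw [hleft, hright, sub_zero, sub_zero]
    _ = a * x * b := by noncomm_ring

end IsDrazinInverse

theorem stmt7 {F A : Type*} [Field F] [Ring A] [Algebra F A]
    (a aD b bD : A) (haD : IsDrazinInverse a aD) (hbD : IsDrazinInverse b bD)
    (l : F) (hl : l ≠ 0) (h : a * b = l • (b * a)) :
    IsNilpotent (b * (1 - b * bD) * (1 - a * aD) - a * (1 - a * aD) * (1 - b * bD)) := by
  have hba : b * a = l⁻¹ • (a * b) := by rw [h, inv_smul_smul₀ hl]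
  have hbe : Commute b (a * aD) := haD.commute_mul_of_mul_eq_smul hl h
  have haf : Commute a (b * bD) := hbD.commute_mul_of_mul_eq_smul (inv_ne_zero hl) hba
  have hfe : Commute (b * bD) (a * aD) :=
    haD.commute_mul_of_mul_eq_smul (μ := (1 : F)) one_ne_zero (by rw [one_smul]; exact haf.eq)
  set p := 1 - a * aD
  set q := 1 - b * bD
  have hap : Commute a p := haD.commute_one_sub
  have hbq : Commute b q := hbD.commute_one_sub
  have hbp : Commute b p := (Commute.one_right b).sub_right hbe
  have haq : Commute a q := (Commute.one_right a).sub_right haf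
  have hpq : Commute p q :=
    (Commute.one_left q).sub_left ((Commute.one_right _).sub_right hfe.symm)
  have hskew : a * p * (b * q) = l • (b * q * (a * p)) :=
    mul_mul_mul_eq_smul_of_commute h hbp haq hpq
  have hbqpq : b * q * (p * q) = b * q * p := by
    rw [hpq.eq, ← mul_assoc, mul_assoc b q q, hbD.isIdempotentElem_mul.one_sub.eq]
  have happq : a * p * (p * q) = a * p * q := by
    rw [← mul_assoc, mul_assoc a p p, haD.isIdempotentElem_mul.one_sub.eq]
  rw [← hbqpq, ← happq, ← sub_mul]
  refine Commute.isNilpotent_mul_right ?_ (isNilpotent_sub_of_mul_eq_smul_mul hskew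
    hbD.isNilpotent_mul_one_sub haD.isNilpotent_mul_one_sub)
  exact ((hbp.mul_left hpq.symm).mul_right (hbq.mul_left (.refl q))).sub_left
    ((hap.mul_left (.refl p)).mul_right (haq.mul_left hpq))
end
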